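/- arXiv:1602.02961 — 3 statements merged into one kernel-verified Lean document; each statement's English description precedes it below -/
import Mathlib

section
/- Let N ≥ 2, Ω ⊆ ℝ^N an open set, and u : Ω → ℝ^N a Lebesgue measurable vector field with |u| = 1 a.e. in Ω that satisfies the kinetic formulation. Then u is distributionally curl-free: for all indices 1 ≤ i, j ≤ N and every φ ∈ C_c^∞(Ω), ∫_Ω (u_i(x) ∂_j φ(x) − u_j(x) ∂_i φ(x)) dx = 0. -/
open MeasureTheory Metric Set Filter
open scoped RealInnerProductSpace ENNReal Topology

noncomputable section

/-- `χ(x, ξ) = 1` if `u(x)·ξ > 0` and `0` otherwise. -/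
def chi {N : ℕ} (u : EuclideanSpace ℝ (Fin N) → EuclideanSpace ℝ (Fin N))
    (x ξ : EuclideanSpace ℝ (Fin N)) : ℝ :=
  if 0 < ⟪u x, ξ⟫ then 1 else 0

/-- The kinetic formulation: for every unit direction `ξ`, every `v ⊥ ξ` and every
test function `φ ∈ C_c^∞(Ω)`, `∫_Ω χ(x,ξ) (v·∇φ(x)) dx = 0`. -/
def KineticFormulation {N : ℕ} (Ω : Set (EuclideanSpace ℝ (Fin N)))
    (u : EuclideanSpace ℝ (Fin N) → EuclideanSpace ℝ (Fin N)) : Prop :=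
  ∀ ξ : EuclideanSpace ℝ (Fin N), ‖ξ‖ = 1 →
    ∀ v : EuclideanSpace ℝ (Fin N), ⟪v, ξ⟫ = 0 →
      ∀ φ : EuclideanSpace ℝ (Fin N) → ℝ, ContDiff ℝ (⊤ : ℕ∞) φ → HasCompactSupport φ →
        tsupport φ ⊆ Ω →
        ∫ x in Ω, chi u x ξ * ⟪v, gradient φ x⟫ = 0

/-- `x₀` is a Lebesgue point of `f` with value `f₀`. -/
def IsLebesguePoint {E : Type*} [MeasureSpace E] [PseudoMetricSpace E]
    {F : Type*} [NormedAddCommGroup F]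
    (f : E → F) (x₀ : E) (f₀ : F) : Prop :=
  Tendsto (fun r : ℝ => ⨍ x in Metric.ball x₀ r, ‖f x - f₀‖) (𝓝[>] 0) (𝓝 0)

namespace KP

variable {N : ℕ}

local notation "E" => EuclideanSpace ℝ (Fin N)

lemma gauss_integrable {b : ℝ} (hb : 0 < b) :
    Integrable (fun ξ : E => Real.exp (-b * ‖ξ‖ ^ 2)) := by
  have h := (GaussianFourier.integrable_cexp_neg_mul_sq_norm_add (V := E) (b := (b : ℂ))
    (by simpa using hb) 0 0).norm
  convert h using 2 with ξ
  rw [Complex.norm_exp]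
  congr 1
  simp [Complex.add_re, Complex.mul_re]
  exact Or.inl (by norm_cast)

lemma norm_gauss_integrable :
    Integrable (fun ξ : E => ‖ξ‖ * Real.exp (-‖ξ‖ ^ 2)) := by
  refine (gauss_integrable (b := (1:ℝ)/2) (by norm_num)).mono'
    ((measurable_norm.mul (measurable_norm.pow_const 2).neg.exp).aestronglyMeasurable) ?_
  · filter_upwards with ξ
    have ht : (0:ℝ) ≤ ‖ξ‖ := norm_nonneg _
    set t := ‖ξ‖
    have h1 : t ≤ Real.exp (t ^ 2 / 2) := by
      have := Real.add_one_le_exp (t ^ 2 / 2)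
      nlinarith [sq_nonneg (t - 1)]
    have h2 : t * Real.exp (-t ^ 2) ≤ Real.exp (-(1/2) * t ^ 2) := by
      calc t * Real.exp (-t ^ 2) ≤ Real.exp (t ^ 2 / 2) * Real.exp (-t ^ 2) := by
            exact mul_le_mul_of_nonneg_right h1 (Real.exp_pos _).le
        _ = Real.exp (-(1/2) * t ^ 2) := by rw [← Real.exp_add]; ring_nf
    have h3 : 0 ≤ t * Real.exp (-t ^ 2) := by positivity
    rw [Real.norm_eq_abs, abs_of_nonneg h3]
    simpa using h2


/-- The weight function. -/
def coeff (w ξ : E) : ℝ := (if 0 < ⟪w, ξ⟫ then (1:ℝ) else 0) * Real.exp (-‖ξ‖ ^ 2)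

lemma coeff_measurable (w : E) : Measurable (coeff w) := by
  apply Measurable.mul
  · exact Measurable.ite
      (measurableSet_lt measurable_const ((continuous_const.inner continuous_id).measurable))
      measurable_const measurable_const
  · exact (measurable_norm.pow_const 2).neg.exp

lemma abs_coeff_le (w ξ : E) : |coeff w ξ| ≤ Real.exp (-‖ξ‖ ^ 2) := by
  rw [coeff]
  split_ifs <;> simp [abs_of_nonneg (Real.exp_pos _).le, (Real.exp_pos _).le]

lemma integrable_coeff_smul (w : E) : Integrable (fun ξ : E => coeff w ξ • ξ) := by
  refine norm_gauss_integrable.mono'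
    (((coeff_measurable w).aestronglyMeasurable).smul aestronglyMeasurable_id) ?_
  filter_upwards with ξ
  calc ‖coeff w ξ • ξ‖ = |coeff w ξ| * ‖ξ‖ := by rw [norm_smul, Real.norm_eq_abs]
    _ ≤ Real.exp (-‖ξ‖ ^ 2) * ‖ξ‖ := mul_le_mul_of_nonneg_right (abs_coeff_le w ξ) (norm_nonneg ξ)
    _ = ‖ξ‖ * Real.exp (-‖ξ‖ ^ 2) := mul_comm _ _

/-- The vector-valued average. -/
def psi (w : E) : E := ∫ ξ : E, coeff w ξ • ξ

lemma psi_equivariant (T : E ≃ₗᵢ[ℝ] E) (w : E) : psi (T w) = T (psi w) := by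
  have hmp := T.measurePreserving
  have h1 : psi (T w) = ∫ η : E, coeff (T w) (T η) • (T η : E) := by
    rw [psi]
    exact (hmp.integral_comp T.toHomeomorph.measurableEmbedding _).symm
  rw [h1]
  have h2 : ∀ η : E, coeff (T w) (T η) • (T η : E) = T (coeff w η • η) := by
    intro η
    rw [coeff, T.inner_map_map, T.norm_map, ← coeff, T.map_smul]
  simp_rw [h2]
  have h3 := (T.toContinuousLinearEquiv.toContinuousLinearMap).integral_comp_comm
    (integrable_coeff_smul w)
  exact h3


lemma psi_inner_eq (w z : E) : ⟪z, psi w⟫ = ∫ ξ : E, coeff w ξ * ⟪z, ξ⟫ := by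
  rw [psi, ← integral_inner (integrable_coeff_smul w) z]
  simp_rw [real_inner_smul_right]

lemma psi_perp {w z : E} (hz : ⟪z, w⟫ = 0) : ⟪z, psi w⟫ = 0 := by
  set R := Submodule.reflection (ℝ ∙ z)ᗮ with hR
  have hRw : R w = w := Submodule.reflection_mem_subspace_eq_self
    ((Submodule.mem_orthogonal_singleton_iff_inner_right).mpr hz)
  have hRz : R z = -z := Submodule.reflection_orthogonalComplement_singleton_eq_neg z
  have h1 : ⟪z, psi w⟫ = ⟪z, R (psi w)⟫ := by
    conv_lhs => rw [← hRw, psi_equivariant]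
  have h2 : ⟪R z, R (psi w)⟫ = ⟪z, psi w⟫ := R.inner_map_map z (psi w)
  rw [hRz, inner_neg_left] at h2
  rw [h1] at h2 ⊢
  linarith

lemma psi_eq_smul {w : E} (hw : ‖w‖ = 1) : psi w = ⟪w, psi w⟫ • w := by
  set y := psi w - ⟪w, psi w⟫ • w with hy
  have hww : ⟪w, w⟫ = 1 := by
    rw [real_inner_self_eq_norm_sq, hw]; norm_num
  have hyw : ⟪y, w⟫ = 0 := by
    rw [hy, inner_sub_left, real_inner_smul_left, real_inner_comm w (psi w)] at *
    rw [hww]; ring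
  have hyp : ⟪y, psi w⟫ = 0 := psi_perp hyw
  have hyy : ⟪y, y⟫ = 0 := by
    calc ⟪y, y⟫ = ⟪y, psi w - ⟪w, psi w⟫ • w⟫ := by rw [← hy]
      _ = ⟪y, psi w⟫ - ⟪w, psi w⟫ * ⟪y, w⟫ := by
          rw [inner_sub_right, real_inner_smul_right]
      _ = 0 := by rw [hyp, hyw]; ring
  have h0 : y = 0 := by rwa [inner_self_eq_zero] at hyy
  rw [hy, sub_eq_zero] at h0
  exact h0

lemma inner_psi_const {w w' : E} (hw : ‖w‖ = 1) (hw' : ‖w'‖ = 1) :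
    ⟪w, psi w⟫ = ⟪w', psi w'⟫ := by
  set T := Submodule.reflection (ℝ ∙ (w' - w))ᗮ with hT
  have hTw : T w' = w := Submodule.reflection_sub (by rw [hw, hw'])
  calc ⟪w, psi w⟫ = ⟪T w', psi (T w')⟫ := by rw [hTw]
    _ = ⟪T w', T (psi w')⟫ := by rw [psi_equivariant]
    _ = ⟪w', psi w'⟫ := T.inner_map_map _ _

lemma inner_psi_pos {w : E} (hw : ‖w‖ = 1) : 0 < ⟪w, psi w⟫ := by
  rw [psi_inner_eq]
  have hw0 : w ≠ 0 := by intro h; rw [h] at hw; simp at hw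
  have hint : Integrable (fun ξ : E => coeff w ξ * ⟪w, ξ⟫) := by
    have h := Integrable.const_inner (𝕜 := ℝ) w (integrable_coeff_smul (N := N) w)
    simpa only [real_inner_smul_right] using h
  rw [show (fun ξ : E => coeff w ξ * ⟪w, ξ⟫) = fun ξ : E =>
    (if 0 < ⟪w, ξ⟫ then (1:ℝ) else 0) * Real.exp (-‖ξ‖ ^ 2) * ⟪w, ξ⟫ from rfl] at hint ⊢
  rw [integral_pos_iff_support_of_nonneg]
  · have hopen : IsOpen {ξ : E | 0 < ⟪w, ξ⟫} :=
      isOpen_lt continuous_const (continuous_const.inner continuous_id)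
    have hsupp : Function.support (fun ξ : E =>
        (if 0 < ⟪w, ξ⟫ then (1:ℝ) else 0) * Real.exp (-‖ξ‖ ^ 2) * ⟪w, ξ⟫)
        = {ξ : E | 0 < ⟪w, ξ⟫} := by
      ext ξ
      simp only [Function.mem_support, Set.mem_setOf_eq]
      constructor
      · intro h
        by_contra hc
        rw [if_neg hc, zero_mul, zero_mul] at h
        exact h rfl
      · intro h
        rw [if_pos h]
        positivity
    rw [hsupp]
    refine hopen.measure_pos volume ⟨w, ?_⟩
    simp only [Set.mem_setOf_eq, real_inner_self_eq_norm_sq, hw]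
    norm_num
  · intro ξ
    dsimp only
    split_ifs with h
    · positivity
    · simp
  · exact hint


lemma psi_eq {w w₀ : E} (hw : ‖w‖ = 1) (hw₀ : ‖w₀‖ = 1) :
    psi w = ⟪w₀, psi w₀⟫ • w := by
  rw [psi_eq_smul hw, inner_psi_const hw hw₀]

end KP

set_option maxHeartbeats 1000000 in
theorem kinetic_implies_curl_free (N : ℕ) (hN : 2 ≤ N)
    (Ω : Set (EuclideanSpace ℝ (Fin N))) (hΩ : IsOpen Ω)
    (u : EuclideanSpace ℝ (Fin N) → EuclideanSpace ℝ (Fin N)) (hmeas : Measurable u)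
    (hunit : ∀ᵐ x ∂volume.restrict Ω, ‖u x‖ = 1)
    (hkin : KineticFormulation Ω u)
    (i j : Fin N)
    (φ : EuclideanSpace ℝ (Fin N) → ℝ) (hφ : ContDiff ℝ (⊤ : ℕ∞) φ)
    (hsupp : HasCompactSupport φ) (hsub : tsupport φ ⊆ Ω) :
    ∫ x in Ω, (u x i * fderiv ℝ φ x (EuclideanSpace.single j 1)
      - u x j * fderiv ℝ φ x (EuclideanSpace.single i 1)) = 0 := by
  classical
  set μ := volume.restrict Ω with hμ
  set e : Fin N → EuclideanSpace ℝ (Fin N) := fun k => EuclideanSpace.single k 1 with he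
  have he_norm : ∀ k, ‖e k‖ = 1 := by intro k; simp [he, EuclideanSpace.norm_single]
  have he_inner : ∀ (k : Fin N) (ξ : EuclideanSpace ℝ (Fin N)), ⟪e k, ξ⟫ = ξ k := by
    intro k ξ; simp [he, EuclideanSpace.inner_single_left]
  -- gradient facts
  have hgrad_inner : ∀ (z x : EuclideanSpace ℝ (Fin N)), ⟪z, gradient φ x⟫ = fderiv ℝ φ x z := by
    intro z x
    rw [real_inner_comm, gradient, InnerProductSpace.toDual_symm_apply]
  have hgradc : Continuous (gradient φ) := by
    have h1 : Continuous (fderiv ℝ φ) := (hφ.continuous_fderiv (by simp))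
    exact ((InnerProductSpace.toDual ℝ (EuclideanSpace ℝ (Fin N))).symm.continuous).comp h1
  have hgradsupp : HasCompactSupport (gradient φ) := by
    have h1 : HasCompactSupport (fderiv ℝ φ) := hsupp.fderiv (𝕜 := ℝ)
    exact h1.comp_left (g := fun L : EuclideanSpace ℝ (Fin N) →L[ℝ] ℝ => (InnerProductSpace.toDual ℝ (EuclideanSpace ℝ (Fin N))).symm L)
      (by simp)
  -- integrability of x ↦ ⟪z, ∇φ x⟫ on Ω
  have hgint : ∀ z : EuclideanSpace ℝ (Fin N), Integrable (fun x => ⟪z, gradient φ x⟫) μ := by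
    intro z
    refine (Continuous.integrable_of_hasCompactSupport
      (continuous_const.inner hgradc) ?_).restrict
    exact hgradsupp.comp_left (g := fun y : EuclideanSpace ℝ (Fin N) => ⟪z, y⟫) (by simp)
  -- chi is bounded and measurable in x
  have hchi_meas : ∀ ξ : EuclideanSpace ℝ (Fin N), Measurable (fun x => chi u x ξ) := by
    intro ξ
    exact Measurable.ite
      (measurableSet_lt measurable_const (hmeas.inner measurable_const))
      measurable_const measurable_const
  have hchi_bdd : ∀ x ξ, ‖chi u x ξ‖ ≤ 1 := by
    intro x ξ; rw [chi]; split_ifs <;> simp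
  -- integrability of chi * inner-gradient
  have hchiInt : ∀ (ξ z : EuclideanSpace ℝ (Fin N)), Integrable (fun x => chi u x ξ * ⟪z, gradient φ x⟫) μ := by
    intro ξ z
    exact (hgint z).bdd_mul (c := 1) ((hchi_meas ξ).aestronglyMeasurable) (Eventually.of_forall fun x => hchi_bdd x ξ)
  -- the function F
  set F : EuclideanSpace ℝ (Fin N) → ℝ := fun ξ => ∫ x in Ω, chi u x ξ * ⟪ξ, gradient φ x⟫ with hF
  -- Step K : the kinetic formulation identity for general ξ ≠ 0
  have hK : ∀ (ξ : EuclideanSpace ℝ (Fin N)), ξ ≠ 0 → ∀ z : EuclideanSpace ℝ (Fin N),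
      ∫ x in Ω, chi u x ξ * ⟪z, gradient φ x⟫ = (⟪z, ξ⟫ / ‖ξ‖ ^ 2) * F ξ := by
    intro ξ hξ z
    have hnξ : (0:ℝ) < ‖ξ‖ := norm_pos_iff.mpr hξ
    set a : ℝ := ⟪z, ξ⟫ / ‖ξ‖ ^ 2 with ha
    set v : EuclideanSpace ℝ (Fin N) := z - a • ξ with hv
    have hvξ : ⟪v, ξ⟫ = 0 := by
      rw [hv, inner_sub_left, real_inner_smul_left, ha, real_inner_self_eq_norm_sq]
      field_simp
      ring
    have hξ1 : ‖(‖ξ‖⁻¹ • ξ : EuclideanSpace ℝ (Fin N))‖ = 1 := by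
      rw [norm_smul, norm_inv, norm_norm, inv_mul_cancel₀ hnξ.ne']
    have hv1 : ⟪v, ‖ξ‖⁻¹ • ξ⟫ = 0 := by rw [real_inner_smul_right, hvξ, mul_zero]
    have h0 := hkin (‖ξ‖⁻¹ • ξ) hξ1 v hv1 φ hφ hsupp hsub
    have hchi_eq : ∀ x, chi u x (‖ξ‖⁻¹ • ξ) = chi u x ξ := by
      intro x
      have hpos : (0:ℝ) < ‖ξ‖⁻¹ := by positivity
      rw [chi, chi, real_inner_smul_right]
      by_cases h : 0 < ⟪u x, ξ⟫
      · rw [if_pos h, if_pos (mul_pos hpos h)]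
      · rw [if_neg h, if_neg (fun hc => h (by nlinarith))]
    simp_rw [hchi_eq] at h0
    have hsplit : ∀ x, chi u x ξ * ⟪z, gradient φ x⟫
        = chi u x ξ * ⟪v, gradient φ x⟫ + a * (chi u x ξ * ⟪ξ, gradient φ x⟫) := by
      intro x
      rw [hv, inner_sub_left, real_inner_smul_left]
      ring
    calc ∫ x in Ω, chi u x ξ * ⟪z, gradient φ x⟫
        = ∫ x in Ω, (chi u x ξ * ⟪v, gradient φ x⟫
            + a * (chi u x ξ * ⟪ξ, gradient φ x⟫)) := by simp_rw [hsplit]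
      _ = (∫ x in Ω, chi u x ξ * ⟪v, gradient φ x⟫)
          + a * ∫ x in Ω, chi u x ξ * ⟪ξ, gradient φ x⟫ := by
          rw [integral_add (hchiInt ξ v) ((hchiInt ξ ξ).const_mul a), integral_const_mul]
      _ = a * F ξ := by rw [h0, zero_add, hF]
  -- the constant c
  set c : ℝ := ⟪e i, KP.psi (e i)⟫ with hc
  have hcpos : 0 < c := KP.inner_psi_pos (he_norm i)
  have hpsi_u : ∀ᵐ x ∂μ, ∀ z : EuclideanSpace ℝ (Fin N),
      ⟪z, KP.psi (u x)⟫ = c * ⟪z, u x⟫ := by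
    filter_upwards [hunit] with x hx
    intro z
    rw [KP.psi_eq_smul hx, KP.inner_psi_const hx (he_norm i), real_inner_smul_right, hc]
  -- nontrivial instance for NoAtoms
  haveI : Nontrivial (EuclideanSpace ℝ (Fin N)) := by
    refine ⟨0, EuclideanSpace.single ⟨0, by omega⟩ 1, ?_⟩
    intro h
    have := congrArg (fun w : EuclideanSpace ℝ (Fin N) => w ⟨0, by omega⟩) h
    simp at this
  have hae0 : ∀ᵐ ξ : EuclideanSpace ℝ (Fin N) ∂volume, ξ ≠ 0 := by
    rw [ae_iff]
    simp only [ne_eq, not_not]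
    have : {ξ : EuclideanSpace ℝ (Fin N) | ξ = 0} = {0} := by ext; simp
    rw [this]
    exact measure_singleton 0
  -- the key Fubini computation
  have key : ∀ k l : Fin N, c * (∫ x in Ω, u x k * ⟪e l, gradient φ x⟫)
      = ∫ ξ : EuclideanSpace ℝ (Fin N),
          Real.exp (-‖ξ‖ ^ 2) * (ξ k * ξ l / ‖ξ‖ ^ 2) * F ξ := by
    intro k l
    rw [← integral_const_mul]
    have step1 : ∀ᵐ x ∂μ, c * (u x k * ⟪e l, gradient φ x⟫)
        = ∫ ξ : EuclideanSpace ℝ (Fin N),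
            chi u x ξ * Real.exp (-‖ξ‖ ^ 2) * ξ k * ⟪e l, gradient φ x⟫ := by
      filter_upwards [hpsi_u] with x hx
      have h1 : c * u x k = ⟪e k, KP.psi (u x)⟫ := by
        rw [hx (e k), he_inner]
      rw [show c * (u x k * ⟪e l, gradient φ x⟫)
          = (c * u x k) * ⟪e l, gradient φ x⟫ by ring, h1,
        KP.psi_inner_eq, ← integral_mul_const]
      congr 1 with ξ
      rw [KP.coeff, he_inner, chi]
    rw [integral_congr_ae step1]
    -- Fubini
    have hprod : Integrable (fun p : (EuclideanSpace ℝ (Fin N)) × (EuclideanSpace ℝ (Fin N)) =>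
        chi u p.1 p.2 * Real.exp (-‖p.2‖ ^ 2) * p.2 k * ⟪e l, gradient φ p.1⟫)
        (μ.prod volume) := by
      have hm : AEStronglyMeasurable
          (fun p : (EuclideanSpace ℝ (Fin N)) × (EuclideanSpace ℝ (Fin N)) =>
            chi u p.1 p.2 * Real.exp (-‖p.2‖ ^ 2) * p.2 k * ⟪e l, gradient φ p.1⟫)
          (μ.prod volume) := by
        apply Measurable.aestronglyMeasurable
        have m1 : Measurable (fun p : (EuclideanSpace ℝ (Fin N)) × (EuclideanSpace ℝ (Fin N)) =>
            chi u p.1 p.2) := by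
          apply Measurable.ite _ measurable_const measurable_const
          exact measurableSet_lt measurable_const
            ((hmeas.comp measurable_fst).inner measurable_snd)
        have m2 : Measurable (fun p : (EuclideanSpace ℝ (Fin N)) × (EuclideanSpace ℝ (Fin N)) =>
            Real.exp (-‖p.2‖ ^ 2)) :=
          (continuous_snd.norm.pow 2).neg.rexp.measurable
        have m3 : Measurable (fun p : (EuclideanSpace ℝ (Fin N)) × (EuclideanSpace ℝ (Fin N)) =>
            p.2 k) :=
          ((EuclideanSpace.proj k).continuous.comp continuous_snd).measurable
        have m4 : Measurable (fun p : (EuclideanSpace ℝ (Fin N)) × (EuclideanSpace ℝ (Fin N)) =>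
            ⟪e l, gradient φ p.1⟫) :=
          (continuous_const.inner (hgradc.comp continuous_fst)).measurable
        exact ((m1.mul m2).mul m3).mul m4
      refine Integrable.mono'
        (g := fun p : (EuclideanSpace ℝ (Fin N)) × (EuclideanSpace ℝ (Fin N)) =>
          |⟪e l, gradient φ p.1⟫| * (‖p.2‖ * Real.exp (-‖p.2‖ ^ 2)))
        (Integrable.mul_prod ((hgint (e l)).abs) KP.norm_gauss_integrable) hm ?_
      filter_upwards with p
      have h1 : |p.2 k| ≤ ‖p.2‖ := by
        have h2 := abs_real_inner_le_norm (e k) p.2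
        rw [he_inner, he_norm, one_mul] at h2
        exact h2
      have h3 : |chi u p.1 p.2| ≤ 1 := by
        rw [chi]; split_ifs <;> norm_num
      have h4 : (0:ℝ) < Real.exp (-‖p.2‖ ^ 2) := Real.exp_pos _
      rw [Real.norm_eq_abs, abs_mul, abs_mul, abs_mul, abs_of_pos h4]
      calc |chi u p.1 p.2| * Real.exp (-‖p.2‖ ^ 2) * |p.2 k| * |⟪e l, gradient φ p.1⟫|
          ≤ 1 * Real.exp (-‖p.2‖ ^ 2) * ‖p.2‖ * |⟪e l, gradient φ p.1⟫| := by
            gcongr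
        _ = |⟪e l, gradient φ p.1⟫| * (‖p.2‖ * Real.exp (-‖p.2‖ ^ 2)) := by ring
    rw [MeasureTheory.integral_integral_swap hprod]
    refine integral_congr_ae ?_
    filter_upwards [hae0] with ξ hξ0
    have h5 : ∀ x : EuclideanSpace ℝ (Fin N),
        chi u x ξ * Real.exp (-‖ξ‖ ^ 2) * ξ k * ⟪e l, gradient φ x⟫
        = (Real.exp (-‖ξ‖ ^ 2) * ξ k) * (chi u x ξ * ⟪e l, gradient φ x⟫) := by
      intro x; ring
    simp_rw [h5]
    rw [integral_const_mul, hK ξ hξ0 (e l), he_inner]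
    ring
  -- integrability of the curl integrand pieces
  have hInt1 : ∀ k l : Fin N, Integrable (fun x => u x k * ⟪e l, gradient φ x⟫) μ := by
    intro k l
    refine (hgint (e l)).bdd_mul (c := 1)
      (((EuclideanSpace.proj k).continuous.measurable.comp hmeas).aestronglyMeasurable) ?_
    filter_upwards [hunit] with x hx
    rw [Real.norm_eq_abs]
    calc |u x k| = |⟪e k, u x⟫| := by rw [he_inner]
      _ ≤ ‖e k‖ * ‖u x‖ := abs_real_inner_le_norm _ _
      _ = 1 := by rw [he_norm, hx, one_mul]
  -- finish
  have hgoal : ∀ (x : EuclideanSpace ℝ (Fin N)) (k l : Fin N),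
      u x k * fderiv ℝ φ x (EuclideanSpace.single l 1) = u x k * ⟪e l, gradient φ x⟫ := by
    intro x k l
    rw [hgrad_inner, he]
  simp_rw [hgoal]
  rw [integral_sub (hInt1 i j) (hInt1 j i)]
  have h1 := key i j
  have h2 := key j i
  have heq : (fun ξ : EuclideanSpace ℝ (Fin N) =>
        Real.exp (-‖ξ‖ ^ 2) * (ξ i * ξ j / ‖ξ‖ ^ 2) * F ξ)
      = fun ξ : EuclideanSpace ℝ (Fin N) =>
        Real.exp (-‖ξ‖ ^ 2) * (ξ j * ξ i / ‖ξ‖ ^ 2) * F ξ := by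
    funext ξ; ring
  have h3 : c * (∫ x in Ω, u x i * ⟪e j, gradient φ x⟫)
      = c * (∫ x in Ω, u x j * ⟪e i, gradient φ x⟫) := by
    rw [h1, heq]
    exact h2.symm
  have h4 := mul_left_cancel₀ hcpos.ne' h3
  rw [h4, sub_self]
end
end

section
/- Let N ≥ 3 and let 𝒟 be a set of affine lines in ℝ^N (affine subspaces of dimension 1) such that any two lines of 𝒟 are coplanar, i.e. any two lines of 𝒟 are contained in a common affine subspace of dimension at most 2, but 𝒟 itself is not planar, i.e. there is no affine subspace of dimension at most 2 containing every line of 𝒟. Then either all lines of 𝒟 have the same direction (they are pairwise parallel), or there exists a point P ∈ ℝ^N contained in every line of 𝒟. -/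
open Set

noncomputable section

/-- A (affine) line in Euclidean space: a set of the form {p + t d : t in R} with d nonzero. -/
def IsLine {N : ℕ} (l : Set (EuclideanSpace ℝ (Fin N))) : Prop :=
  ∃ p d : EuclideanSpace ℝ (Fin N), d ≠ 0 ∧ l = {x | ∃ t : ℝ, x = p + t • d}

namespace PCLaux

variable {N : ℕ}

/-- The line through `p` with direction `d`. -/
def L (p d : EuclideanSpace ℝ (Fin N)) : Set (EuclideanSpace ℝ (Fin N)) :=
  {x | ∃ t : ℝ, x = p + t • d}

lemma span_symm {d d' : EuclideanSpace ℝ (Fin N)} (hd : d ≠ 0)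
    (h : d ∈ Submodule.span ℝ {d'}) : d' ∈ Submodule.span ℝ {d} := by
  obtain ⟨c, hc⟩ := Submodule.mem_span_singleton.mp h
  have hc0 : c ≠ 0 := by rintro rfl; rw [zero_smul] at hc; exact hd hc.symm
  exact Submodule.mem_span_singleton.mpr ⟨c⁻¹, by rw [← hc, smul_smul, inv_mul_cancel₀ hc0, one_smul]⟩

lemma L_rewrite {p d q : EuclideanSpace ℝ (Fin N)} (hq : q ∈ L p d) : L p d = L q d := by
  obtain ⟨s, rfl⟩ := hq
  ext x
  constructor
  · rintro ⟨t, rfl⟩; exact ⟨t - s, by module⟩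
  · rintro ⟨t, rfl⟩; exact ⟨s + t, by module⟩

lemma L_rescale {p d : EuclideanSpace ℝ (Fin N)} {c : ℝ} (hc : c ≠ 0) :
    L p (c • d) = L p d := by
  ext x
  constructor
  · rintro ⟨t, rfl⟩; exact ⟨t * c, by rw [smul_smul]⟩
  · rintro ⟨t, rfl⟩; exact ⟨t / c, by rw [smul_smul, div_mul_cancel₀ _ hc]⟩

lemma indep {d₁ d₂ : EuclideanSpace ℝ (Fin N)} (h1 : d₁ ≠ 0)
    (h2 : d₂ ∉ Submodule.span ℝ {d₁}) : LinearIndependent ℝ ![d₂, d₁] := by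
  rw [linearIndependent_fin2]
  refine ⟨by simpa using h1, fun a ha => h2 ?_⟩
  exact Submodule.mem_span_singleton.mpr ⟨a, by simpa using ha⟩

lemma finrank_span_pair {d₁ d₂ : EuclideanSpace ℝ (Fin N)} (h1 : d₁ ≠ 0)
    (h2 : d₂ ∉ Submodule.span ℝ {d₁}) :
    Module.finrank ℝ (Submodule.span ℝ ({d₂, d₁} : Set (EuclideanSpace ℝ (Fin N)))) = 2 := by
  have hrange : Set.range ![d₂, d₁] = {d₂, d₁} := by
    ext x
    simp [Fin.exists_fin_two, or_comm]
  have := finrank_span_eq_card (indep h1 h2)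
  rw [hrange] at this
  simpa using this

/-- Two coplanar lines with "independent" directions meet. -/
lemma meet {p₁ d₁ p₂ d₂ : EuclideanSpace ℝ (Fin N)} (h1 : d₁ ≠ 0)
    (h2 : d₂ ∉ Submodule.span ℝ {d₁})
    (hc : Coplanar ℝ (L p₁ d₁ ∪ L p₂ d₂)) :
    ∃ a b : ℝ, p₂ - p₁ = a • d₁ + b • d₂ := by
  set s := L p₁ d₁ ∪ L p₂ d₂ with hs
  have h₁s : ∀ t : ℝ, p₁ + t • d₁ ∈ s := fun t => Or.inl ⟨t, rfl⟩
  have h₂s : ∀ t : ℝ, p₂ + t • d₂ ∈ s := fun t => Or.inr ⟨t, rfl⟩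
  have hd₁ : d₁ ∈ vectorSpan ℝ s := by
    have h := vsub_mem_vectorSpan ℝ (h₁s 1) (h₁s 0)
    have he : (p₁ + (1:ℝ) • d₁) -ᵥ (p₁ + (0:ℝ) • d₁) = d₁ := by
      rw [vsub_eq_sub]; module
    rwa [he] at h
  have hd₂ : d₂ ∈ vectorSpan ℝ s := by
    have h := vsub_mem_vectorSpan ℝ (h₂s 1) (h₂s 0)
    have he : (p₂ + (1:ℝ) • d₂) -ᵥ (p₂ + (0:ℝ) • d₂) = d₂ := by
      rw [vsub_eq_sub]; module
    rwa [he] at h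
  have hp : p₂ - p₁ ∈ vectorSpan ℝ s := by
    have h := vsub_mem_vectorSpan ℝ (h₂s 0) (h₁s 0)
    have he : (p₂ + (0:ℝ) • d₂) -ᵥ (p₁ + (0:ℝ) • d₁) = p₂ - p₁ := by
      rw [vsub_eq_sub]; module
    rwa [he] at h
  set W := Submodule.span ℝ ({d₂, d₁} : Set (EuclideanSpace ℝ (Fin N))) with hW
  have hWle : W ≤ vectorSpan ℝ s := by
    rw [hW, Submodule.span_le]
    rintro x hx
    simp only [Set.mem_insert_iff, Set.mem_singleton_iff] at hx
    rcases hx with rfl | rfl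
    · exact hd₂
    · exact hd₁
  have hW2 : Module.finrank ℝ W = 2 := finrank_span_pair h1 h2
  have hfle : Module.finrank ℝ (vectorSpan ℝ s) ≤ 2 := hc.finrank_le_two
  have hEq : W = vectorSpan ℝ s :=
    Submodule.eq_of_le_of_finrank_le hWle (by rw [hW2]; exact hfle)
  have hmem : p₂ - p₁ ∈ W := by rw [hEq]; exact hp
  obtain ⟨a, b, hab⟩ := Submodule.mem_span_pair.mp hmem
  exact ⟨b, a, by rw [← hab]; abel⟩

/-- Two lines with independent directions meet in at most one point. -/
lemma unique_meet {p₁ d₁ p₂ d₂ x y : EuclideanSpace ℝ (Fin N)} (h1 : d₁ ≠ 0)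
    (h2 : d₂ ∉ Submodule.span ℝ {d₁})
    (hx : x ∈ L p₁ d₁ ∩ L p₂ d₂) (hy : y ∈ L p₁ d₁ ∩ L p₂ d₂) : x = y := by
  obtain ⟨⟨s, hx1⟩, u, hx2⟩ := hx
  obtain ⟨⟨s', hy1⟩, u', hy2⟩ := hy
  by_cases huu : u' = u
  · rw [hy2, huu, ← hx2]
  · exfalso
    apply h2
    have key : (u' - u) • d₂ = (s' - s) • d₁ := by
      have h := congrArg₂ (fun a b => a - b) (hy2.symm.trans hy1) (hx2.symm.trans hx1)
      have h' : (p₂ + u' • d₂) - (p₂ + u • d₂) = (p₁ + s' • d₁) - (p₁ + s • d₁) := by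
        rw [← hy2, ← hx2, hy1, hx1]
      have e1 : (p₂ + u' • d₂) - (p₂ + u • d₂) = (u' - u) • d₂ := by module
      have e2 : (p₁ + s' • d₁) - (p₁ + s • d₁) = (s' - s) • d₁ := by module
      rw [e1, e2] at h'
      exact h'
    have hu0 : u' - u ≠ 0 := sub_ne_zero.mpr huu
    refine Submodule.mem_span_singleton.mpr ⟨(u' - u)⁻¹ * (s' - s), ?_⟩
    rw [mul_smul, ← key, smul_smul, inv_mul_cancel₀ hu0, one_smul]

end PCLaux

open PCLaux

theorem pairwise_coplanar_lines (N : ℕ) (hN : 3 ≤ N)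
    (D : Set (Set (EuclideanSpace ℝ (Fin N))))
    (hlines : ∀ l ∈ D, IsLine l)
    (hcop : ∀ l₁ ∈ D, ∀ l₂ ∈ D, Coplanar ℝ (l₁ ∪ l₂))
    (hnp : ¬ Coplanar ℝ (⋃₀ D)) :
    (∃ d : EuclideanSpace ℝ (Fin N), d ≠ 0 ∧
      ∀ l ∈ D, ∃ p : EuclideanSpace ℝ (Fin N), l = {x | ∃ t : ℝ, x = p + t • d}) ∨
    (∃ P : EuclideanSpace ℝ (Fin N), ∀ l ∈ D, P ∈ l) := by
  classical
  rcases Set.eq_empty_or_nonempty D with rfl | ⟨l₀, hl₀⟩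
  · exact absurd (by rw [Set.sUnion_empty]; exact coplanar_empty ℝ _) hnp
  obtain ⟨p₀, d₀, hd₀, hl₀eq⟩ := hlines l₀ hl₀
  by_cases hall : ∀ l ∈ D, ∀ p d : EuclideanSpace ℝ (Fin N), d ≠ 0 →
      l = {x | ∃ t : ℝ, x = p + t • d} → d ∈ Submodule.span ℝ {d₀}
  · left
    refine ⟨d₀, hd₀, fun l hl => ?_⟩
    obtain ⟨p, d, hd, hleq⟩ := hlines l hl
    obtain ⟨c, hcd⟩ := Submodule.mem_span_singleton.mp (hall l hl p d hd hleq)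
    have hc : c ≠ 0 := by rintro rfl; rw [zero_smul] at hcd; exact hd hcd.symm
    refine ⟨p, ?_⟩
    have : l = L p d := hleq
    rw [this, ← hcd, L_rescale hc]
    rfl
  · push_neg at hall
    obtain ⟨lB, hlB, pB, dB, hdB, hlBeq, hBnotA⟩ := hall
    have hl₀L : l₀ = L p₀ d₀ := hl₀eq
    have hlBL : lB = L pB dB := hlBeq
    have hcopAB := hcop l₀ hl₀ lB hlB
    rw [hl₀L, hlBL] at hcopAB
    obtain ⟨a, b, hab⟩ := meet hd₀ hBnotA hcopAB
    set P := p₀ + a • d₀ with hPdef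
    have hPA : P ∈ L p₀ d₀ := ⟨a, rfl⟩
    have hPB : P ∈ L pB dB := by
      refine ⟨-b, ?_⟩
      have hpB : pB = p₀ + (a • d₀ + b • dB) := by
        rw [← hab]; abel
      rw [hPdef, hpB]; module
    set W := Submodule.span ℝ ({dB, d₀} : Set (EuclideanSpace ℝ (Fin N))) with hW
    have hd₀W : d₀ ∈ W := Submodule.subset_span (by simp)
    have hdBW : dB ∈ W := Submodule.subset_span (by simp)
    set π : Set (EuclideanSpace ℝ (Fin N)) := {x | x - P ∈ W} with hπ
    have hπmem : ∀ x : EuclideanSpace ℝ (Fin N), x ∈ π ↔ x - P ∈ W := fun x => Iff.rfl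
    have hπline : ∀ q d : EuclideanSpace ℝ (Fin N), q ∈ π → d ∈ W → L q d ⊆ π := by
      rintro q d hq hd x ⟨t, rfl⟩
      rw [hπmem]
      have he : q + t • d - P = (q - P) + t • d := by module
      rw [he]
      exact W.add_mem hq (W.smul_mem t hd)
    have hπP : P ∈ π := by rw [hπmem]; simp
    have hπcop : Coplanar ℝ π := by
      rw [coplanar_iff_finrank_le_two]
      have hle : vectorSpan ℝ π ≤ W := by
        rw [vectorSpan_def, Submodule.span_le]
        rintro v ⟨x, hx, y, hy, rfl⟩
        show x -ᵥ y ∈ W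
        rw [vsub_eq_sub]
        have he : x - y = (x - P) - (y - P) := by abel
        rw [he]
        exact W.sub_mem hx hy
      calc Module.finrank ℝ (vectorSpan ℝ π) ≤ Module.finrank ℝ W :=
            Submodule.finrank_mono hle
        _ = 2 := finrank_span_pair hd₀ hBnotA
    have hkey : ∀ l ∈ D, P ∈ l ∨ l ⊆ π := by
      intro l hl
      obtain ⟨p, d, hd, hleq⟩ := hlines l hl
      have hlL : l = L p d := hleq
      rw [hlL]
      by_cases hA : d ∈ Submodule.span ℝ {d₀}
      · by_cases hB : d ∈ Submodule.span ℝ {dB}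
        · exfalso
          have h1 : dB ∈ Submodule.span ℝ {d} := span_symm hd hB
          have h2 : Submodule.span ℝ ({d} : Set (EuclideanSpace ℝ (Fin N))) ≤
              Submodule.span ℝ {d₀} := Submodule.span_le.mpr (by simpa using hA)
          exact hBnotA (h2 h1)
        · right
          have hcl := hcop lB hlB l hl
          rw [hlBL, hlL] at hcl
          obtain ⟨a', b', hab'⟩ := meet hdB hB hcl
          set B := pB + a' • dB with hBdef
          have hBl : B ∈ L p d := by
            refine ⟨-b', ?_⟩
            have hp' : p = pB + (a' • dB + b' • d) := by rw [← hab']; abel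
            rw [hBdef, hp']; module
          have hBπ : B ∈ π := by
            rw [hπmem]
            obtain ⟨sP, hsP⟩ := hPB
            have he : B - P = (a' - sP) • dB := by rw [hBdef, hsP]; module
            rw [he]; exact W.smul_mem _ hdBW
          have hdW : d ∈ W := by
            obtain ⟨c, hc⟩ := Submodule.mem_span_singleton.mp hA
            rw [← hc]; exact W.smul_mem _ hd₀W
          rw [L_rewrite hBl]
          exact hπline B d hBπ hdW
      · have hclA := hcop l₀ hl₀ l hl
        rw [hl₀L, hlL] at hclA
        obtain ⟨a₁, b₁, hab₁⟩ := meet hd₀ hA hclA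
        set A := p₀ + a₁ • d₀ with hAdef
        have hAl : A ∈ L p d := by
          refine ⟨-b₁, ?_⟩
          have hp' : p = p₀ + (a₁ • d₀ + b₁ • d) := by rw [← hab₁]; abel
          rw [hAdef, hp']; module
        have hAπ : A ∈ π := by
          rw [hπmem]
          have he : A - P = (a₁ - a) • d₀ := by rw [hAdef, hPdef]; module
          rw [he]; exact W.smul_mem _ hd₀W
        by_cases hB : d ∈ Submodule.span ℝ {dB}
        · right
          have hdW : d ∈ W := by
            obtain ⟨c, hc⟩ := Submodule.mem_span_singleton.mp hB
            rw [← hc]; exact W.smul_mem _ hdBW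
          rw [L_rewrite hAl]
          exact hπline A d hAπ hdW
        · have hclB := hcop lB hlB l hl
          rw [hlBL, hlL] at hclB
          obtain ⟨a₂, b₂, hab₂⟩ := meet hdB hB hclB
          set Bp := pB + a₂ • dB with hBpdef
          have hBl : Bp ∈ L p d := by
            refine ⟨-b₂, ?_⟩
            have hp' : p = pB + (a₂ • dB + b₂ • d) := by rw [← hab₂]; abel
            rw [hBpdef, hp']; module
          by_cases hABeq : A = Bp
          · left
            have hAint : A ∈ L p₀ d₀ ∩ L pB dB :=
              ⟨⟨a₁, rfl⟩, by rw [hABeq]; exact ⟨a₂, rfl⟩⟩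
            have hPint : P ∈ L p₀ d₀ ∩ L pB dB := ⟨hPA, hPB⟩
            have hAP : A = P := unique_meet hd₀ hBnotA hAint hPint
            exact hAP ▸ hAl
          · right
            have hBπ : Bp ∈ π := by
              rw [hπmem]
              obtain ⟨sP, hsP⟩ := hPB
              have he : Bp - P = (a₂ - sP) • dB := by rw [hBpdef, hsP]; module
              rw [he]; exact W.smul_mem _ hdBW
            obtain ⟨t₁, ht₁⟩ := id hAl
            obtain ⟨t₂, ht₂⟩ := id hBl
            have hBA : Bp - A = (t₂ - t₁) • d := by rw [ht₁, ht₂]; module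
            have ht : t₂ - t₁ ≠ 0 := by
              intro h
              apply hABeq
              rw [sub_eq_zero] at h
              rw [ht₁, ht₂, h]
            have hdW : d ∈ W := by
              have he : d = (t₂ - t₁)⁻¹ • (Bp - A) := by
                rw [hBA, smul_smul, inv_mul_cancel₀ ht, one_smul]
              have he2 : Bp - A = (Bp - P) - (A - P) := by abel
              rw [he, he2]
              exact W.smul_mem _ (W.sub_mem ((hπmem Bp).mp hBπ) ((hπmem A).mp hAπ))
            rw [L_rewrite hAl]
            exact hπline A d hAπ hdW
    have hl₃ : ∃ l₃ ∈ D, ¬ l₃ ⊆ π := by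
      by_contra h
      push_neg at h
      exact hnp (hπcop.subset (Set.sUnion_subset h))
    obtain ⟨l₃, hl₃D, hl₃n⟩ := hl₃
    have hPl₃ : P ∈ l₃ := (hkey l₃ hl₃D).resolve_right hl₃n
    obtain ⟨p₃, d₃, hd₃, hl₃eq⟩ := hlines l₃ hl₃D
    have hl₃L : l₃ = L p₃ d₃ := hl₃eq
    have hPl₃' : P ∈ L p₃ d₃ := by rw [← hl₃L]; exact hPl₃
    have hl₃P : l₃ = L P d₃ := by rw [hl₃L, L_rewrite hPl₃']
    have hd₃W : d₃ ∉ W := by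
      intro h
      exact hl₃n (by rw [hl₃P]; exact hπline P d₃ hπP h)
    right
    refine ⟨P, fun l hl => ?_⟩
    rcases hkey l hl with h | hsub
    · exact h
    · obtain ⟨p, d, hd, hleq⟩ := hlines l hl
      have hlL : l = L p d := hleq
      have hsub' : L p d ⊆ π := by rw [← hlL]; exact hsub
      have hdW : d ∈ W := by
        have h1 : p ∈ π := hsub' ⟨0, by simp⟩
        have h2 : p + d ∈ π := hsub' ⟨1, by simp⟩
        have he : d = (p + d - P) - (p - P) := by abel
        rw [he]
        exact W.sub_mem ((hπmem _).mp h2) ((hπmem _).mp h1)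
      have hd₃d : d₃ ∉ Submodule.span ℝ {d} := by
        intro h
        obtain ⟨c, hc⟩ := Submodule.mem_span_singleton.mp h
        exact hd₃W (by rw [← hc]; exact W.smul_mem _ hdW)
      have hcl := hcop l hl l₃ hl₃D
      rw [hlL, hl₃P] at hcl
      obtain ⟨a', b', hab'⟩ := meet hd hd₃d hcl
      have hQ : p + a' • d ∈ π := hsub' ⟨a', rfl⟩
      have hQ' : (p + a' • d) - P = (-b') • d₃ := by
        have hP' : P = p + (a' • d + b' • d₃) := by rw [← hab']; abel
        rw [hP']; module
      have hb' : b' = 0 := by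
        by_contra hb
        apply hd₃W
        have he : d₃ = (-b')⁻¹ • ((p + a' • d) - P) := by
          rw [hQ', smul_smul, inv_mul_cancel₀ (neg_ne_zero.mpr hb), one_smul]
        rw [he]
        exact W.smul_mem _ ((hπmem _).mp hQ)
      rw [hlL]
      refine ⟨a', ?_⟩
      rw [hb'] at hab'
      rw [zero_smul, add_zero] at hab'
      rw [← hab']; abel
end
end

section
/- Let N ≥ 3, let a, b ∈ S^{N−1} ⊂ ℝ^N, and let p ∈ ℝ^N with p ≠ 0. Suppose that for every ξ ∈ ℝ^N with ξ·p = 0 it is not the case that a·ξ > 0 and b·ξ < 0. Then the vectors a, b, p are linearly dependent; equivalently, the line through a point P₀ with direction a and the line through P₀ + p with direction b are coplanar. -/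
/-! Linear independence of `a, b, p` makes `ξ ↦ (⟪ξ, a⟫, ⟪ξ, b⟫, ⟪ξ, p⟫)` onto `ℝ³`, so some
`ξ ⊥ p` has `⟪a, ξ⟫ = 1` and `⟪b, ξ⟫ = -1`. -/

open scoped RealInnerProductSpace

noncomputable section

open scoped InnerProductSpace in
theorem LinearIndependent.exists_inner_eq {𝕜 E ι : Type*} [RCLike 𝕜] [NormedAddCommGroup E]
    [InnerProductSpace 𝕜 E] [Finite ι] {v : ι → E} (hv : LinearIndependent 𝕜 v) (c : ι → 𝕜) :
    ∃ ξ : E, ∀ i, ⟪ξ, v i⟫_𝕜 = c i := by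
  have := Fintype.ofFinite ι
  let K := Submodule.span 𝕜 (Set.range v)
  let b : Module.Basis ι 𝕜 K := Module.Basis.span hv
  have : FiniteDimensional 𝕜 K := .of_basis b
  -- Riesz representation, inside `K`, of the functional sending `v i` to `c i`
  let f : StrongDual 𝕜 K := LinearMap.toContinuousLinearMap (b.constr 𝕜 c)
  refine ⟨(InnerProductSpace.toDual 𝕜 K).symm f, fun i => ?_⟩
  rw [← Module.Basis.coe_span_apply hv i, ← Submodule.coe_inner,
    InnerProductSpace.toDual_symm_apply]
  exact b.constr_basis 𝕜 c i

theorem coplanar_of_no_separating_direction_general (N : ℕ)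
    (a b : EuclideanSpace ℝ (Fin N))
    (p : EuclideanSpace ℝ (Fin N))
    (h : ∀ ξ : EuclideanSpace ℝ (Fin N), ⟪ξ, p⟫ = 0 → ¬(0 < ⟪a, ξ⟫ ∧ ⟪b, ξ⟫ < 0)) :
    ¬ LinearIndependent ℝ ![a, b, p] := by
  intro hli
  obtain ⟨ξ, hξ⟩ := hli.exists_inner_eq ![1, -1, 0]
  have hξa : ⟪a, ξ⟫ = 1 := by rw [real_inner_comm]; exact hξ 0
  have hξb : ⟪b, ξ⟫ = -1 := by rw [real_inner_comm]; exact hξ 1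
  exact h ξ (hξ 2) ⟨hξa ▸ one_pos, hξb ▸ neg_one_lt_zero⟩

theorem coplanar_of_no_separating_direction (N : ℕ) (hN : 3 ≤ N)
    (a b : EuclideanSpace ℝ (Fin N)) (ha : ‖a‖ = 1) (hb : ‖b‖ = 1)
    (p : EuclideanSpace ℝ (Fin N)) (hp : p ≠ 0)
    (h : ∀ ξ : EuclideanSpace ℝ (Fin N), ⟪ξ, p⟫ = 0 → ¬(0 < ⟪a, ξ⟫ ∧ ⟪b, ξ⟫ < 0)) :
    ¬ LinearIndependent ℝ ![a, b, p] :=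
  coplanar_of_no_separating_direction_general N a b p h
end
end
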